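/- Let D be a domain in ℝ^N, N ≥ 2, let u : D → [0, +∞) be a nonnegative subharmonic function, and let p > 0. Then there exists a constant C = C(N, p), depending only on N and p, such that u(x)^p ≤ (C/(ν_N r^N)) ∫_{B^N(x,r)} u(y)^p dm_N(y) for every x ∈ D and r > 0 with the closed ball B̄^N(x,r) ⊂ D. -/

import Mathlib

open MeasureTheory Metric Set Filter ENNReal Topology

noncomputable section

/-- The nonnegative part of an extended real number, as an element of `ℝ≥0∞`. -/
noncomputable def erealPos (x : EReal) : ℝ≥0∞ :=
  if x = ⊤ then ⊤ else ENNReal.ofReal x.toReal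

/-- The extended-real-valued Lebesgue integral of `u : V → [-∞,+∞]` over a set `A`:
the `lintegral` of the positive part minus the `lintegral` of the negative part. -/
noncomputable def esInt {V : Type*} [MeasureSpace V] (A : Set V) (u : V → EReal) : EReal :=
  ((∫⁻ y in A, erealPos (u y) : ℝ≥0∞) : EReal) - ((∫⁻ y in A, erealPos (-(u y)) : ℝ≥0∞) : EReal)

/-- `u` is subharmonic on `D`: it takes values in `[-∞, +∞)` on `D`, is upper semicontinuous
on `D`, and satisfies the sub-mean value inequality `u x ≤ (1/(ν_N r^N)) ∫_{B(x,r)} u dm_N`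
whenever the closed ball `B̄(x,r) ⊆ D`.  (Note `volume (ball x r) = ν_N r^N` in `ℝ^N`.) -/
def IsSubh {V : Type*} [MeasureSpace V] [PseudoMetricSpace V] (D : Set V) (u : V → EReal) : Prop :=
  UpperSemicontinuousOn u D ∧ (∀ x ∈ D, u x ≠ ⊤) ∧
    ∀ x ∈ D, ∀ r > (0:ℝ), closedBall x r ⊆ D →
      u x ≤ ((((volume (ball x r)).toReal)⁻¹ : ℝ) : EReal) * esInt (ball x r) u

/-- `u` is nearly subharmonic on `D`: it is measurable, takes values in `[-∞, +∞)` on `D`,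
`u⁺` is locally integrable on `D`, and `u` satisfies the sub-mean value inequality on all
closed balls contained in `D`. -/
def IsNearlySubh {V : Type*} [MeasureSpace V] [PseudoMetricSpace V] (D : Set V)
    (u : V → EReal) : Prop :=
  Measurable u ∧ (∀ x ∈ D, u x ≠ ⊤) ∧
    LocallyIntegrableOn (fun y => ((u y) ⊔ 0).toReal) D volume ∧
    ∀ x ∈ D, ∀ r > (0:ℝ), closedBall x r ⊆ D →
      u x ≤ ((((volume (ball x r)).toReal)⁻¹ : ℝ) : EReal) * esInt (ball x r) u

/-- `u` is `K`-quasinearly subharmonic on `D`: it is measurable, takes values in `[-∞, +∞)`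
on `D`, `u⁺` is locally integrable on `D`, and for every `M ≥ 0` the function
`u_M := max {u, -M} + M` satisfies `u_M x ≤ (K/(ν_N r^N)) ∫_{B(x,r)} u_M dm_N` whenever
`B̄(x,r) ⊆ D`. -/
def IsQNS {V : Type*} [MeasureSpace V] [PseudoMetricSpace V] (K : ℝ) (D : Set V)
    (u : V → EReal) : Prop :=
  Measurable u ∧ (∀ x ∈ D, u x ≠ ⊤) ∧
    LocallyIntegrableOn (fun y => ((u y) ⊔ 0).toReal) D volume ∧
    ∀ M : ℝ, 0 ≤ M → ∀ x ∈ D, ∀ r > (0:ℝ), closedBall x r ⊆ D →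
      (u x ⊔ ((-M : ℝ) : EReal)) + (M : EReal) ≤
        ((K * ((volume (ball x r)).toReal)⁻¹ : ℝ) : EReal) *
          esInt (ball x r) (fun y => (u y ⊔ ((-M : ℝ) : EReal)) + (M : EReal))


/-!
For `p ≥ 1` the estimate is Jensen's inequality applied to the sub-mean value inequality, with
`C = 1`. For `0 < p < 1` let `s k` be the supremum of `u` on the closed ball of radius
`(1 - 2⁻ᵏ) r` about `x`. Every point of that ball is the centre of a ball of radius `2⁻ᵏ⁻¹ r`
inside the next one, on which `u ≤ s (k+1) ^ (1-p) * u ^ p`; the sub-mean value inequality there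
gives `s k ≤ c * (2 ^ N) ^ (k+1) * s (k+1) ^ (1-p)`, where `c` is the mean of `u ^ p` over
`B(x, r)`. Iterating, the exponents of `c` sum to `∑ (1-p)^k = 1/p`, those of `2 ^ N` to a finite
`σ`, and the remainder `s n ^ ((1-p)^n)` tends to at most `1` because the upper semicontinuous `u`
is bounded on the compact ball. Hence `u x ^ p ≤ s 0 ^ p ≤ (2 ^ N) ^ (p σ) * c`.
-/

theorem UpperSemicontinuousOn.of_coe_ereal {α : Type*} [TopologicalSpace α] {f : α → ℝ}
    {s : Set α} (hf : UpperSemicontinuousOn (fun x => (f x : EReal)) s) :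
    UpperSemicontinuousOn f s := fun x hx y hy =>
  (hf x hx y (EReal.coe_lt_coe_iff.2 hy)).mono fun _ h => EReal.coe_lt_coe_iff.1 h

theorem UpperSemicontinuousOn.aemeasurable {α β : Type*} [TopologicalSpace α]
    [MeasurableSpace α] [OpensMeasurableSpace α] [LinearOrder β] [TopologicalSpace β]
    [OrderTopology β] [SecondCountableTopology β] [MeasurableSpace β] [BorelSpace β]
    {f : α → β} {s : Set α} {μ : Measure α} (hf : UpperSemicontinuousOn f s)
    (hs : MeasurableSet s) : AEMeasurable f (μ.restrict s) :=
  aemeasurable_restrict_of_measurable_subtype hs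
    (upperSemicontinuousOn_iff_restrict.2 hf).measurable

theorem UpperSemicontinuousOn.integrableOn_rpow {α : Type*} [TopologicalSpace α]
    [MeasurableSpace α] [OpensMeasurableSpace α] {μ : Measure α} [IsFiniteMeasureOnCompacts μ]
    {f : α → ℝ} {K : Set α} (hK : IsCompact K) (hKm : MeasurableSet K)
    (hf : UpperSemicontinuousOn f K) (hf0 : ∀ x ∈ K, 0 ≤ f x) {p : ℝ} (hp : 0 ≤ p) :
    IntegrableOn (fun x => f x ^ p) K μ := by
  obtain ⟨M, hM⟩ := hf.bddAbove_of_isCompact hK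
  refine .of_bound hK.measure_lt_top ((hf.aemeasurable hKm).pow_const p).aestronglyMeasurable
    (M ^ p) ?_
  refine (ae_restrict_iff' hKm).2 (ae_of_all _ fun x hx => ?_)
  rw [Real.norm_of_nonneg (Real.rpow_nonneg (hf0 x hx) p)]
  exact Real.rpow_le_rpow (hf0 x hx) (hM (mem_image_of_mem f hx)) hp

theorem UpperSemicontinuousOn.integrableOn {α : Type*} [TopologicalSpace α]
    [MeasurableSpace α] [OpensMeasurableSpace α] {μ : Measure α} [IsFiniteMeasureOnCompacts μ]
    {f : α → ℝ} {K : Set α} (hK : IsCompact K) (hKm : MeasurableSet K)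
    (hf : UpperSemicontinuousOn f K) (hf0 : ∀ x ∈ K, 0 ≤ f x) : IntegrableOn f K μ := by
  simpa using hf.integrableOn_rpow (μ := μ) hK hKm hf0 zero_le_one

theorem esInt_coe_of_nonneg {V : Type*} [MeasureSpace V] {A : Set V} (hA : MeasurableSet A)
    {u : V → ℝ} (hu0 : ∀ y ∈ A, 0 ≤ u y) (hu : IntegrableOn u A) :
    esInt A (fun y => (u y : EReal)) = ((∫ y in A, u y : ℝ) : EReal) := by
  have hpos : ∫⁻ y in A, erealPos (u y) = ENNReal.ofReal (∫ y in A, u y) := by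
    rw [ofReal_integral_eq_lintegral_ofReal hu ((ae_restrict_iff' hA).2 (ae_of_all _ hu0))]
    exact setLIntegral_congr_fun hA fun y _ => by simp [erealPos]
  have hneg : ∫⁻ y in A, erealPos (-(u y : EReal)) = 0 := by
    rw [setLIntegral_congr_fun hA (g := 0) fun y hy => by
      simp [erealPos, ← EReal.coe_neg, hu0 y hy], Pi.zero_def, lintegral_zero]
  rw [esInt, hpos, hneg, EReal.coe_ennreal_ofReal,
    max_eq_left (setIntegral_nonneg hA hu0), EReal.coe_ennreal_zero, sub_zero]

theorem Real.self_le_rpow_one_sub_mul_rpow {a m p : ℝ} (ha : 0 ≤ a) (ham : a ≤ m)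
    (hp0 : 0 ≤ p) (hp1 : p ≤ 1) : a ≤ m ^ (1 - p) * a ^ p :=
  calc a = a ^ (1 - p) * a ^ p := by
        rw [← Real.rpow_add_of_nonneg ha (by linarith) hp0, sub_add_cancel, Real.rpow_one]
    _ ≤ m ^ (1 - p) * a ^ p := by gcongr

theorem le_of_rpow_iteration {q c g B : ℝ} (hq0 : 0 ≤ q) (hq1 : q < 1) (hc : 0 ≤ c)
    (hg : 1 ≤ g) {a : ℕ → ℝ} (ha : ∀ k, 0 ≤ a k) (hB : ∀ k, a k ≤ B)
    (hrec : ∀ k, a k ≤ c * g ^ (k + 1) * a (k + 1) ^ q) :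
    a 0 ≤ c ^ (1 - q)⁻¹ * g ^ ∑' k : ℕ, (k + 1 : ℝ) * q ^ k := by
  set T : ℕ → ℝ := fun n => ∑ k ∈ Finset.range n, q ^ k
  set S : ℕ → ℝ := fun n => ∑ k ∈ Finset.range n, (k + 1 : ℝ) * q ^ k
  have hg0 : 0 < g := zero_lt_one.trans_le hg
  have hT0 : ∀ n, 0 ≤ T n := fun n => Finset.sum_nonneg fun k _ => pow_nonneg hq0 k
  have hiter : ∀ n, a 0 ≤ c ^ T n * g ^ S n * a n ^ q ^ n := by
    intro n
    induction n with
    | zero => simp [T, S]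
    | succ n ih =>
      calc a 0 ≤ c ^ T n * g ^ S n * a n ^ q ^ n := ih
        _ ≤ c ^ T n * g ^ S n * (c * g ^ (n + 1) * a (n + 1) ^ q) ^ q ^ n := by
          gcongr
          exacts [ha n, hrec n]
        _ = c ^ T (n + 1) * g ^ S (n + 1) * a (n + 1) ^ q ^ (n + 1) := by
          simp only [T, S, Finset.sum_range_succ]
          rw [Real.mul_rpow (by positivity) (Real.rpow_nonneg (ha _) _),
            Real.mul_rpow hc (by positivity), ← Real.rpow_natCast_mul hg0.le,
            ← Real.rpow_mul (ha _), Real.rpow_add_of_nonneg hc (hT0 n) (pow_nonneg hq0 n),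
            Real.rpow_add hg0, pow_succ' q n]
          push_cast
          ring
  have hsum : Summable fun k : ℕ => (k + 1 : ℝ) * q ^ k := by
    simpa [add_mul] using (summable_pow_mul_geometric_of_norm_lt_one 1
      (by rwa [Real.norm_of_nonneg hq0])).add (summable_geometric_of_lt_one hq0 hq1)
  set B' := max B 1
  set σ := ∑' k : ℕ, (k + 1 : ℝ) * q ^ k
  have hbound : ∀ n, a 0 ≤ c ^ T n * g ^ σ * B' ^ q ^ n := by
    intro n
    calc a 0 ≤ c ^ T n * g ^ S n * a n ^ q ^ n := hiter n
      _ ≤ _ := by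
        have hSn : S n ≤ σ := hsum.sum_le_tsum _ fun k _ => by positivity
        have haB : a n ≤ B' := (hB n).trans (le_max_left B 1)
        have han := ha n
        gcongr
  have hlim : Tendsto (fun n => c ^ T n * g ^ σ * B' ^ q ^ n) atTop
      (𝓝 (c ^ (1 - q)⁻¹ * g ^ σ * B' ^ (0 : ℝ))) := by
    refine ((Real.continuousAt_const_rpow' ?_).tendsto.comp
      (hasSum_geometric_of_lt_one hq0 hq1).tendsto_sum_nat).mul_const _ |>.mul
      ((Real.continuousAt_const_rpow ?_).tendsto.comp
        (tendsto_pow_atTop_nhds_zero_of_lt_one hq0 hq1))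
    · exact inv_ne_zero (sub_ne_zero.2 hq1.ne')
    · exact (zero_lt_one.trans_le (le_max_right B 1)).ne'
  simpa using ge_of_tendsto' hlim hbound

def SubMeanValueOn {α : Type*} [PseudoMetricSpace α] [MeasurableSpace α] (μ : Measure α)
    (u : α → ℝ) (K : Set α) : Prop :=
  ∀ z ρ, 0 < ρ → closedBall z ρ ⊆ K → u z ≤ ⨍ y in ball z ρ, u y ∂μ

theorem SubMeanValueOn.mono {α : Type*} [PseudoMetricSpace α] [MeasurableSpace α]
    {μ : Measure α} {u : α → ℝ} {K L : Set α} (h : SubMeanValueOn μ u L) (hKL : K ⊆ L) :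
    SubMeanValueOn μ u K := fun z ρ hρ hz => h z ρ hρ (hz.trans hKL)

theorem IsSubh.subMeanValueOn {V : Type*} [PseudoMetricSpace V] [ProperSpace V] [MeasureSpace V]
    [OpensMeasurableSpace V] [IsFiniteMeasureOnCompacts (volume : Measure V)] {D : Set V}
    {u : V → ℝ} (hsub : IsSubh D fun x => (u x : EReal)) (hu0 : ∀ x ∈ D, 0 ≤ u x) :
    SubMeanValueOn volume u D := by
  intro z ρ hρ hzD
  have hu0' : ∀ y ∈ closedBall z ρ, 0 ≤ u y := fun y hy => hu0 y (hzD hy)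
  have hint : IntegrableOn u (ball z ρ) :=
    ((hsub.1.of_coe_ereal.mono hzD).integrableOn (isCompact_closedBall z ρ)
      measurableSet_closedBall hu0').mono_set ball_subset_closedBall
  have h := hsub.2.2 z (hzD (mem_closedBall_self hρ.le)) ρ hρ hzD
  rw [esInt_coe_of_nonneg measurableSet_ball (fun y hy => hu0' y (ball_subset_closedBall hy))
    hint, ← EReal.coe_mul] at h
  rw [setAverage_eq, smul_eq_mul, measureReal_def]
  exact EReal.coe_le_coe_iff.1 h

theorem SubMeanValueOn.rpow_le_setAverage_rpow {α : Type*} [PseudoMetricSpace α]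
    [ProperSpace α] [MeasurableSpace α] [OpensMeasurableSpace α] {μ : Measure α}
    [IsFiniteMeasureOnCompacts μ] [μ.IsOpenPosMeasure] {u : α → ℝ} {x : α} {r : ℝ} (hr : 0 < r)
    (hsm : SubMeanValueOn μ u (closedBall x r)) (husc : UpperSemicontinuousOn u (closedBall x r))
    (hu0 : ∀ y ∈ closedBall x r, 0 ≤ u y) {p : ℝ} (hp : 1 ≤ p) :
    u x ^ p ≤ ⨍ y in ball x r, u y ^ p ∂μ := by
  have hint : IntegrableOn u (ball x r) μ :=
    (husc.integrableOn (isCompact_closedBall x r) measurableSet_closedBall hu0).mono_set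
      ball_subset_closedBall
  have hintp : IntegrableOn (fun y => u y ^ p) (ball x r) μ :=
    (husc.integrableOn_rpow (isCompact_closedBall x r) measurableSet_closedBall hu0
      (zero_le_one.trans hp)).mono_set ball_subset_closedBall
  have hcont : ContinuousOn (fun y : ℝ => y ^ p) (Ici 0) := fun y _ =>
    (Real.continuousAt_rpow_const y p (Or.inr (zero_le_one.trans hp))).continuousWithinAt
  have hjensen := (convexOn_rpow hp).map_set_average_le hcont isClosed_Ici
    (measure_ball_pos μ x hr).ne' measure_ball_lt_top.ne
    ((ae_restrict_iff' measurableSet_ball).2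
      (ae_of_all _ fun y hy => hu0 y (ball_subset_closedBall hy))) hint hintp
  calc u x ^ p ≤ (⨍ y in ball x r, u y ∂μ) ^ p :=
        Real.rpow_le_rpow (hu0 x (mem_closedBall_self hr.le))
          (hsm x r hr subset_rfl) (zero_le_one.trans hp)
    _ ≤ ⨍ y in ball x r, u y ^ p ∂μ := hjensen

section AddHaar

variable {E : Type*} [NormedAddCommGroup E] [NormedSpace ℝ E] [FiniteDimensional ℝ E]
  [MeasurableSpace E] [BorelSpace E] {μ : Measure E} [μ.IsAddHaarMeasure]

theorem measureReal_ball_mul (z x : E) {c : ℝ} (hc : 0 < c) (r : ℝ) :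
    μ.real (ball z (c * r)) = c ^ Module.finrank ℝ E * μ.real (ball x r) := by
  rw [measureReal_def, Measure.addHaar_ball_mul_of_pos μ z hc, ENNReal.toReal_mul,
    ENNReal.toReal_ofReal (by positivity), Measure.addHaar_real_ball_center μ x,
    measureReal_def]

variable {u : E → ℝ} {x : E} {r : ℝ}

theorem SubMeanValueOn.sSup_le_of_add_le (hsm : SubMeanValueOn μ u (closedBall x r))
    (husc : UpperSemicontinuousOn u (closedBall x r)) (hu0 : ∀ y ∈ closedBall x r, 0 ≤ u y)
    {p : ℝ} (hp0 : 0 ≤ p) (hp1 : p ≤ 1) {t ρ : ℝ} (ht : 0 ≤ t) (hρ : 0 < ρ)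
    (htρ : t + ρ ≤ r) :
    sSup (u '' closedBall x t) ≤
      (μ.real (ball x ρ))⁻¹ * (∫ y in ball x r, u y ^ p ∂μ) *
        sSup (u '' closedBall x (t + ρ)) ^ (1 - p) := by
  set S := sSup (u '' closedBall x (t + ρ))
  have hbdd : BddAbove (u '' closedBall x (t + ρ)) :=
    (husc.bddAbove_of_isCompact (isCompact_closedBall x r)).mono
      (image_mono (closedBall_subset_closedBall htρ))
  have hint := husc.integrableOn (μ := μ) (isCompact_closedBall x r) measurableSet_closedBall hu0
  have hintp := husc.integrableOn_rpow (μ := μ) (isCompact_closedBall x r)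
    measurableSet_closedBall hu0 hp0
  refine csSup_le ((nonempty_closedBall.2 ht).image u) ?_
  rintro _ ⟨z, hz, rfl⟩
  have hzt : ρ + dist z x ≤ t + ρ := by linarith [mem_closedBall.1 hz]
  have hzr : closedBall z ρ ⊆ closedBall x r :=
    (closedBall_subset_closedBall' hzt).trans (closedBall_subset_closedBall htρ)
  have hball : ball z ρ ⊆ ball x r := ball_subset_ball' (hzt.trans htρ)
  have hintegral : ∫ y in ball z ρ, u y ∂μ ≤ S ^ (1 - p) * ∫ y in ball x r, u y ^ p ∂μ :=
    calc ∫ y in ball z ρ, u y ∂μ ≤ ∫ y in ball z ρ, S ^ (1 - p) * u y ^ p ∂μ := by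
          refine setIntegral_mono_on (hint.mono_set (ball_subset_closedBall.trans hzr))
            ((hintp.mono_set (ball_subset_closedBall.trans hzr)).const_mul _)
            measurableSet_ball fun y hy => ?_
          have hy' : y ∈ closedBall x (t + ρ) :=
            closedBall_subset_closedBall' hzt (ball_subset_closedBall hy)
          exact Real.self_le_rpow_one_sub_mul_rpow (hu0 y (hzr (ball_subset_closedBall hy)))
            (le_csSup hbdd (mem_image_of_mem u hy')) hp0 hp1
      _ = S ^ (1 - p) * ∫ y in ball z ρ, u y ^ p ∂μ := integral_const_mul _ _
      _ ≤ S ^ (1 - p) * ∫ y in ball x r, u y ^ p ∂μ := by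
          refine mul_le_mul_of_nonneg_left ?_ (Real.rpow_nonneg ?_ _)
          · exact setIntegral_mono_set (hintp.mono_set ball_subset_closedBall)
              ((ae_restrict_iff' measurableSet_ball).2 (ae_of_all _ fun y hy =>
                Real.rpow_nonneg (hu0 y (ball_subset_closedBall hy)) p))
              hball.eventuallyLE
          · exact (hu0 z (hzr (mem_closedBall_self hρ.le))).trans
              (le_csSup hbdd (mem_image_of_mem u (closedBall_subset_closedBall (by linarith) hz)))
  calc u z ≤ ⨍ y in ball z ρ, u y ∂μ := hsm z ρ hρ hzr
    _ = (μ.real (ball x ρ))⁻¹ * ∫ y in ball z ρ, u y ∂μ := by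
        rw [setAverage_eq, smul_eq_mul, Measure.addHaar_real_ball_center μ z,
          Measure.addHaar_real_ball_center μ x]
    _ ≤ (μ.real (ball x ρ))⁻¹ * (S ^ (1 - p) * ∫ y in ball x r, u y ^ p ∂μ) := by
        gcongr
    _ = _ := by ring

theorem SubMeanValueOn.rpow_le_mul_setAverage_rpow (hr : 0 < r)
    (hsm : SubMeanValueOn μ u (closedBall x r)) (husc : UpperSemicontinuousOn u (closedBall x r))
    (hu0 : ∀ y ∈ closedBall x r, 0 ≤ u y) {p : ℝ} (hp0 : 0 < p) (hp1 : p < 1) :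
    u x ^ p ≤ ((2 : ℝ) ^ Module.finrank ℝ E) ^ (p * ∑' k : ℕ, (k + 1 : ℝ) * (1 - p) ^ k) *
      ⨍ y in ball x r, u y ^ p ∂μ := by
  set g : ℝ := 2 ^ Module.finrank ℝ E
  set c := ⨍ y in ball x r, u y ^ p ∂μ with hc_def
  set t : ℕ → ℝ := fun k => (1 - 2⁻¹ ^ k) * r
  set ρ : ℕ → ℝ := fun k => 2⁻¹ ^ (k + 1) * r
  set s : ℕ → ℝ := fun k => sSup (u '' closedBall x (t k))
  have ht0 : ∀ k, 0 ≤ t k := fun k =>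
    mul_nonneg (sub_nonneg.2 (pow_le_one₀ (by norm_num) (by norm_num))) hr.le
  have htr : ∀ k, t k ≤ r := fun k => by
    simp only [t]
    nlinarith [pow_pos (show (0 : ℝ) < 2⁻¹ by norm_num) k]
  have htρ : ∀ k, t k + ρ k = t (k + 1) := fun k => by simp only [t, ρ]; ring
  obtain ⟨M, hM⟩ := husc.bddAbove_of_isCompact (isCompact_closedBall x r)
  have hsub : ∀ k, u '' closedBall x (t k) ⊆ u '' closedBall x r := fun k =>
    image_mono (closedBall_subset_closedBall (htr k))
  have hux : ∀ k, u x ≤ s k := fun k =>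
    le_csSup (BddAbove.mono (hsub k) ⟨M, hM⟩)
      (mem_image_of_mem u (mem_closedBall_self (ht0 k)))
  have hs0 : ∀ k, 0 ≤ s k := fun k => (hu0 x (mem_closedBall_self hr.le)).trans (hux k)
  have hsM : ∀ k, s k ≤ M := fun k =>
    csSup_le ((nonempty_closedBall.2 (ht0 k)).image u) fun _ hy => hM (hsub k hy)
  have hrec : ∀ k, s k ≤ c * g ^ (k + 1) * s (k + 1) ^ (1 - p) := by
    intro k
    have hvol : (μ.real (ball x (ρ k)))⁻¹ * ∫ y in ball x r, u y ^ p ∂μ = c * g ^ (k + 1) := by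
      rw [measureReal_ball_mul x x (by positivity) r, hc_def, setAverage_eq, smul_eq_mul, mul_inv,
        ← pow_mul, inv_pow, inv_inv, mul_comm (k + 1), pow_mul]
      ring
    have h := hsm.sSup_le_of_add_le husc hu0 hp0.le hp1.le (ht0 k) (by positivity)
      (htρ k ▸ htr (k + 1))
    rwa [htρ k, hvol] at h
  have hc : 0 ≤ c := by
    rw [hc_def, setAverage_eq, smul_eq_mul]
    exact mul_nonneg (inv_nonneg.2 measureReal_nonneg) (setIntegral_nonneg measurableSet_ball
      fun y hy => Real.rpow_nonneg (hu0 y (ball_subset_closedBall hy)) p)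
  have hiter := le_of_rpow_iteration (sub_nonneg.2 hp1.le) (sub_lt_self 1 hp0) hc
    (one_le_pow₀ one_le_two) hs0 hsM hrec
  rw [_root_.sub_sub_cancel] at hiter
  calc u x ^ p ≤ (c ^ p⁻¹ * g ^ ∑' k : ℕ, (k + 1 : ℝ) * (1 - p) ^ k) ^ p :=
        Real.rpow_le_rpow (hu0 x (mem_closedBall_self hr.le)) ((hux 0).trans hiter) hp0.le
    _ = g ^ (p * ∑' k : ℕ, (k + 1 : ℝ) * (1 - p) ^ k) * c := by
        rw [Real.mul_rpow (by positivity) (by positivity), Real.rpow_inv_rpow hc hp0.ne',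
          ← Real.rpow_mul (by positivity), mul_comm p]
        ring

end AddHaar

theorem statement0_general (N : ℕ) (p : ℝ) (hp : 0 < p) :
    ∃ C : ℝ, 0 < C ∧
      ∀ (D : Set (EuclideanSpace ℝ (Fin N))), IsOpen D → IsConnected D →
        ∀ u : EuclideanSpace ℝ (Fin N) → ℝ, (∀ x ∈ D, 0 ≤ u x) →
          IsSubh D (fun x => (u x : EReal)) →
          ∀ x ∈ D, ∀ r > (0:ℝ), closedBall x r ⊆ D →
            u x ^ p ≤ C * ((volume (ball x r)).toReal)⁻¹ * ∫ y in ball x r, u y ^ p := by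
  rcases lt_or_ge p 1 with hp1 | hp1
  · refine ⟨((2 : ℝ) ^ N) ^ (p * ∑' k : ℕ, (k + 1 : ℝ) * (1 - p) ^ k), by positivity, ?_⟩
    intro D _ _ u hu0 hsub x _ r hr hball
    have h := ((hsub.subMeanValueOn hu0).mono hball).rpow_le_mul_setAverage_rpow hr
      (hsub.1.of_coe_ereal.mono hball) (fun y hy => hu0 y (hball hy)) hp hp1
    rwa [finrank_euclideanSpace_fin, setAverage_eq, smul_eq_mul, measureReal_def,
      ← mul_assoc] at h
  · refine ⟨1, one_pos, ?_⟩
    intro D _ _ u hu0 hsub x _ r hr hball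
    have h := ((hsub.subMeanValueOn hu0).mono hball).rpow_le_setAverage_rpow hr
      (hsub.1.of_coe_ereal.mono hball) (fun y hy => hu0 y (hball hy)) hp1
    rw [one_mul]
    rwa [setAverage_eq, smul_eq_mul, measureReal_def] at h

/-- Fefferman–Stein type inequality for nonnegative subharmonic functions:
for `N ≥ 2` and `p > 0` there is a constant `C = C(N,p)` such that for every domain
`D ⊆ ℝ^N` and every nonnegative subharmonic `u` on `D`,
`u(x)^p ≤ (C/(ν_N r^N)) ∫_{B(x,r)} u^p dm_N` whenever `B̄(x,r) ⊆ D`. -/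
theorem statement0 (N : ℕ) (hN : 2 ≤ N) (p : ℝ) (hp : 0 < p) :
    ∃ C : ℝ, 0 < C ∧
      ∀ (D : Set (EuclideanSpace ℝ (Fin N))), IsOpen D → IsConnected D →
        ∀ u : EuclideanSpace ℝ (Fin N) → ℝ, (∀ x ∈ D, 0 ≤ u x) →
          IsSubh D (fun x => (u x : EReal)) →
          ∀ x ∈ D, ∀ r > (0:ℝ), closedBall x r ⊆ D →
            u x ^ p ≤ C * ((volume (ball x r)).toReal)⁻¹ * ∫ y in ball x r, u y ^ p :=
  statement0_general N p hp
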